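/- Let p ≥ 1 and let (a_i)_{i≥0} be a bounded solution of the semi-infinite lattice a_i' = a_i(∏_{j=1}^p a_{i+j} − ∏_{j=1}^p a_{i−j}) on [0,T) (i.e. each a_i is differentiable, a_i(t) ≠ 0, a_l ≡ 0 for l < 0, and sup_{i≥0, t∈[0,T)} |a_i(t)| < ∞). Let S_k^m(t) be the moments of L1(t). Then for every k ≥ 0, 1 ≤ m ≤ p, and t ∈ [0,T), the series Σ_{l=0}^∞ S_{k+(p+1)l}^m(0)·t^l/l! and Σ_{l=0}^∞ S_{(p+1)l}^1(0)·t^l/l! converge absolutely and S_k^m(t)·Σ_{l=0}^∞ S_{(p+1)l}^1(0)·t^l/l! = Σ_{l=0}^∞ S_{k+(p+1)l}^m(0)·t^l/l!. -/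

import Mathlib

open scoped BigOperators

noncomputable section

/-- The `j`-th standard basis sequence `e_j`. -/
def stdBasis (j : ℕ) : ℕ → ℂ := fun i => if i = j then 1 else 0

/-- Entries of the matrix `L1`: `(L1)_{i,i+p} = 1`, `(L1)_{i+1,i} = a_i`, other entries zero. -/
def L1entry (p : ℕ) (a : ℕ → ℂ) : ℕ → ℕ → ℂ :=
  fun i k => if k = i + p then 1 else if i = k + 1 then a k else 0

/-- Action of `L1` on a sequence: `(L1 v)_i = Σ_k (L1)_{ik} v_k` (a finite sum). -/
def L1apply (p : ℕ) (a : ℕ → ℂ) (v : ℕ → ℂ) : ℕ → ℂ :=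
  fun i => ∑ k ∈ Finset.range (i + p + 1), L1entry p a i k * v k

/-- The moments of `L1`: `S_k^m = (L1^k e_0)_{m-1}`. -/
def momL1 (p : ℕ) (a : ℕ → ℂ) (k m : ℕ) : ℂ :=
  (L1apply p a)^[k] (stdBasis 0) (m - 1)

/-!
The lattice equation is the Lax equation `L1' = [L1, Π]`, where `Π` is the strictly lower part
of `L1^{p+1}`. Since `L1^{p+1} e_0 = S_{p+1}^1 e_0 + Π e_0` and `Π` does not reach the rows
`0, …, p`, this gives the moment equation `S_k^m' = S_{k+p+1}^m - S_{p+1}^1 S_k^m` for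
`m ≤ p + 1`. Hence `τ S_k^m`, with `τ = exp ∫₀ᵗ S_{p+1}^1`, has the derivatives
`τ S_{k+(p+1)l}^m`, which are `O(R^l)` because `|S_j^m| ≤ (1 + sup |a_i|)^j`; so `τ S_k^m` is the
sum of its Taylor series at `0`. For `k = 0`, `m = 1` that series is the second one, with sum
`τ(t)`.
-/

open Finset

section Lattice

variable (p : ℕ) (a : ℕ → ℂ)

theorem L1apply_zero (v : ℕ → ℂ) : L1apply p a v 0 = v p := by
  simp [L1apply, L1entry, Finset.sum_ite_eq']

theorem L1apply_succ (v : ℕ → ℂ) (n : ℕ) :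
    L1apply p a v (n + 1) = v (n + 1 + p) + a n * v n := by
  have hsplit : ∀ k, L1entry p a (n + 1) k * v k =
      (if k = n + 1 + p then v k else 0) + (if k = n then a k * v k else 0) := by
    intro k
    unfold L1entry
    split_ifs <;> first | omega | simp
  simp only [L1apply, hsplit, Finset.sum_add_distrib, Finset.sum_ite_eq', Finset.mem_range]
  simp only [show n + 1 + p < n + 1 + p + 1 by omega, show n < n + 1 + p + 1 by omega, if_true]

def L1powE0 (k : ℕ) : ℕ → ℂ := (L1apply p a)^[k] (stdBasis 0)

theorem momL1_eq_L1powE0 (k m : ℕ) : momL1 p a k m = L1powE0 p a k (m - 1) := rfl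

theorem momL1_zero_one : momL1 p a 0 1 = 1 := by simp [momL1, stdBasis]

theorem L1powE0_succ (k : ℕ) : L1powE0 p a (k + 1) = L1apply p a (L1powE0 p a k) :=
  Function.iterate_succ_apply' _ _ _

theorem L1powE0_eq_zero (k n : ℕ) (h : ∀ d, k ≠ n + (p + 1) * d) : L1powE0 p a k n = 0 := by
  induction k generalizing n with
  | zero => simp [L1powE0, stdBasis, show n ≠ 0 from fun hn => h 0 (by omega)]
  | succ k ih =>
    rw [L1powE0_succ]
    cases n with
    | zero => exact (L1apply_zero p a _).trans (ih p fun d hd => h (d + 1) (by rw [hd]; ring))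
    | succ n =>
      rw [L1apply_succ, ih (n + 1 + p) fun d hd => h (d + 1) (by rw [hd]; ring),
        ih n fun d hd => h d (by omega), mul_zero, add_zero]

theorem L1powE0_self (k : ℕ) : L1powE0 p a k k = ∏ j ∈ range k, a j := by
  induction k with
  | zero => simp [L1powE0, stdBasis]
  | succ k ih =>
    rw [L1powE0_succ, L1apply_succ, ih, Finset.prod_range_succ,
      L1powE0_eq_zero p a k _ fun d => by omega]
    ring

theorem norm_L1powE0_le {C : ℝ} (hC : ∀ i, ‖a i‖ ≤ C) (k n : ℕ) :
    ‖L1powE0 p a k n‖ ≤ (1 + C) ^ k := by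
  have hC0 : 0 ≤ C := (norm_nonneg _).trans (hC 0)
  induction k generalizing n with
  | zero => by_cases hn : n = 0 <;> simp [L1powE0, stdBasis, hn]
  | succ k ih =>
    rw [L1powE0_succ]
    cases n with
    | zero => rw [L1apply_zero]; exact (ih p).trans (pow_le_pow_right₀ (by linarith) k.le_succ)
    | succ n =>
      rw [L1apply_succ]
      calc ‖L1powE0 p a k (n + 1 + p) + a n * L1powE0 p a k n‖
          ≤ (1 + C) ^ k + C * (1 + C) ^ k := by
            grw [norm_add_le, norm_mul, ih, ih, hC]
        _ = (1 + C) ^ (k + 1) := by ring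

end Lattice

section Lax

variable (p : ℕ) (a : ℕ → ℂ)

def blockProd (i : ℕ) : ℂ := ∏ j ∈ range (p + 1), a (i + j)

/-- `a_i (∏_{j=1}^p a_{i+j} - ∏_{j=1}^p a_{i-j})` with `a_l = 0` for `l < 0` built in. -/
def latticeRHS (i : ℕ) : ℂ := blockProd p a i - if i < p then 0 else blockProd p a (i - p)

/-- The strictly lower triangular part of `L1^{p+1}`: its only nonzero diagonal is the
`(p+1)`-th subdiagonal, with entries `a_i ⋯ a_{i+p}`. -/
def lowerPart (v : ℕ → ℂ) (n : ℕ) : ℂ :=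
  if n ≤ p then 0 else blockProd p a (n - (p + 1)) * v (n - (p + 1))

theorem lowerPart_of_le (v : ℕ → ℂ) {n : ℕ} (hn : n ≤ p) : lowerPart p a v n = 0 :=
  if_pos hn

theorem lowerPart_add (v : ℕ → ℂ) (n : ℕ) :
    lowerPart p a v (n + (p + 1)) = blockProd p a n * v n := by
  rw [lowerPart, if_neg (by omega), Nat.add_sub_cancel]

theorem blockProd_mul (i : ℕ) : blockProd p a i * a (i + p + 1) = a i * blockProd p a (i + 1) := by
  rw [blockProd, blockProd, show i + p + 1 = i + (p + 1) by ring,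
    ← Finset.prod_range_succ (fun j => a (i + j)), Finset.prod_range_succ', add_zero, mul_comm]
  exact congrArg _ (Finset.prod_congr rfl fun j _ => congrArg a (by ring))

/-- The Lax equation `L1' = [L1, Π]`, with `Π = lowerPart`; together with `[L1, L1^{p+1}] = 0`
it is `L1' = [B, L1]` for the upper part `B = L1^{p+1} - Π`. -/
theorem L1apply_lowerPart_sub (v : ℕ → ℂ) (n : ℕ) :
    L1apply p a (lowerPart p a v) (n + 1) - lowerPart p a (L1apply p a v) (n + 1) =
      latticeRHS p a n * v n := by
  rw [L1apply_succ, show n + 1 + p = n + (p + 1) by ring, lowerPart_add]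
  rcases lt_trichotomy n p with hn | hn | hn
  · simp [latticeRHS, lowerPart, hn, show n ≤ p by omega]
  · subst n
    rw [lowerPart_of_le p a _ le_rfl, ← zero_add (p + 1), lowerPart_add, L1apply_zero]
    simp only [latticeRHS, lt_self_iff_false, if_false, tsub_self, mul_zero, add_zero]
    ring
  · obtain ⟨r, rfl⟩ : ∃ r, n = r + (p + 1) := ⟨n - (p + 1), by omega⟩
    rw [lowerPart_add, show r + (p + 1) + 1 = r + 1 + (p + 1) by ring, lowerPart_add,
      L1apply_succ]
    simp only [latticeRHS, show ¬ r + (p + 1) < p by omega, if_false,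
      show r + (p + 1) - p = r + 1 by omega, show r + 1 + p = r + (p + 1) by ring]
    linear_combination v r * blockProd_mul p a r

theorem L1powE0_p_add_one (n : ℕ) :
    L1powE0 p a (p + 1) n =
      L1powE0 p a (p + 1) 0 * stdBasis 0 n + lowerPart p a (stdBasis 0) n := by
  rcases Nat.eq_zero_or_pos n with rfl | hn
  · simp [lowerPart_of_le, stdBasis]
  obtain rfl | hne := eq_or_ne n (p + 1)
  · rw [L1powE0_self, show p + 1 = 0 + (p + 1) by ring, lowerPart_add]
    simp [stdBasis, blockProd]
  · have hlow : lowerPart p a (stdBasis 0) n = 0 := by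
      unfold lowerPart stdBasis
      split_ifs <;> first | rfl | omega | simp
    rw [hlow, L1powE0_eq_zero p a _ _ fun d => ?_]
    · simp [stdBasis, hn.ne']
    rcases d with _ | _ | d <;> grind

section Flow

variable (p : ℕ) {a : ℝ → ℕ → ℂ} {s : Set ℝ} {t : ℝ}

theorem hasDerivWithinAt_L1powE0
    (ha : ∀ i, HasDerivWithinAt (fun u => a u i) (latticeRHS p (a t) i) s t) (k n : ℕ) :
    HasDerivWithinAt (fun u => L1powE0 p (a u) k n)
      (L1powE0 p (a t) (k + (p + 1)) n - lowerPart p (a t) (L1powE0 p (a t) k) n -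
        L1powE0 p (a t) (p + 1) 0 * L1powE0 p (a t) k n) s t := by
  induction k generalizing n with
  | zero =>
    refine (hasDerivWithinAt_const t s (stdBasis 0 n)).congr_deriv ?_
    rw [zero_add, L1powE0_p_add_one]
    simp [L1powE0]
  | succ k ih =>
    have hshift : ∀ b, L1powE0 p b (k + 1 + (p + 1)) = L1apply p b (L1powE0 p b (k + (p + 1))) :=
      fun b => by rw [← L1powE0_succ]; ring_nf
    simp only [L1powE0_succ p _ k, hshift]
    cases n with
    | zero =>
      simp only [L1apply_zero, lowerPart_of_le p _ _ (Nat.zero_le p)]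
      simpa [lowerPart_of_le p _ _ le_rfl] using ih p
    | succ n =>
      simp only [L1apply_succ]
      refine ((ih (n + 1 + p)).add ((ha n).mul (ih n))).congr_deriv ?_
      have hcomm := L1apply_lowerPart_sub p (a t) (L1powE0 p (a t) k) n
      rw [L1apply_succ] at hcomm
      linear_combination -hcomm

theorem hasDerivWithinAt_momL1
    (ha : ∀ i, HasDerivWithinAt (fun u => a u i) (latticeRHS p (a t) i) s t) (k : ℕ) {m : ℕ}
    (hm : m ≤ p + 1) :
    HasDerivWithinAt (fun u => momL1 p (a u) k m)
      (momL1 p (a t) (k + (p + 1)) m - momL1 p (a t) (p + 1) 1 * momL1 p (a t) k m) s t := by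
  simpa [momL1_eq_L1powE0, lowerPart_of_le p _ _ (show m - 1 ≤ p by omega)] using
    hasDerivWithinAt_L1powE0 p ha k (m - 1)

end Flow

section Taylor

open Filter Nat Set

variable {E : Type*} [NormedAddCommGroup E] [NormedSpace ℝ E]

theorem summable_norm_pow_div_factorial_smul {c : ℕ → E} {M R : ℝ} (hc : ∀ l, ‖c l‖ ≤ M * R ^ l)
    (t : ℝ) : Summable fun l => ‖(t ^ l / l ! : ℝ) • c l‖ := by
  refine .of_nonneg_of_le (fun _ => norm_nonneg _) (fun l => ?_)
    ((Real.summable_pow_div_factorial (R * |t|)).mul_left M)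
  rw [norm_smul, norm_div, norm_pow, Real.norm_eq_abs, Real.norm_natCast]
  calc |t| ^ l / l ! * ‖c l‖ ≤ |t| ^ l / l ! * (M * R ^ l) := by gcongr; exact hc l
    _ = M * ((R * |t|) ^ l / l !) := by ring

theorem hasDerivWithinAt_taylor_sum {g : ℕ → ℝ → E} {s : Set ℝ} {t x : ℝ}
    (hg : ∀ j, HasDerivWithinAt (g j) (g (j + 1) x) s x) (N : ℕ) :
    HasDerivWithinAt (fun u => ∑ l ∈ range (N + 1), ((t - u) ^ l / l ! : ℝ) • g l u)
      (((t - x) ^ N / N ! : ℝ) • g (N + 1) x) s x := by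
  induction N with
  | zero => simpa using hg 0
  | succ N ih =>
    simp only [Finset.sum_range_succ _ (N + 1)]
    have hpow : HasDerivAt (fun u => (t - u) ^ (N + 1) / (N + 1)! : ℝ → ℝ)
        ((N + 1 : ℕ) * (t - x) ^ N * -1 / (N + 1)!) x := by
      simpa using (((hasDerivAt_id x).const_sub t).pow (N + 1)).div_const ((N + 1)! : ℝ)
    refine (ih.add (hpow.hasDerivWithinAt.smul (hg (N + 1)))).congr_deriv ?_
    have hcoef : (t - x) ^ N / N ! + (N + 1 : ℕ) * (t - x) ^ N * -1 / (N + 1)! = 0 := by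
      rw [Nat.factorial_succ]
      push_cast
      field_simp
      ring
    linear_combination (norm := module) hcoef • g (N + 1) x

/-- The Lagrange remainder after `N + 1` terms is `O((R t)^N / N!)`. -/
theorem hasSum_taylor_of_hasDerivWithinAt [CompleteSpace E] {g : ℕ → ℝ → E} {t M R : ℝ}
    (ht : 0 ≤ t) (hg : ∀ j, ∀ x ∈ Icc 0 t, HasDerivWithinAt (g j) (g (j + 1) x) (Icc 0 t) x)
    (hbd : ∀ j, ∀ x ∈ Icc 0 t, ‖g j x‖ ≤ M * R ^ j) :
    HasSum (fun l => (t ^ l / l ! : ℝ) • g l 0) (g 0 t) := by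
  have h0 : (0 : ℝ) ∈ Icc 0 t := ⟨le_rfl, ht⟩
  have hremainder : ∀ N, ‖∑ l ∈ range (N + 1), (t ^ l / l ! : ℝ) • g l 0 - g 0 t‖ ≤
      M * R * t * ((R * t) ^ N / N !) := by
    intro N
    have hmvt := norm_image_sub_le_of_norm_deriv_le_segment'
      (fun x _ => hasDerivWithinAt_taylor_sum (t := t) (fun j => hg j x ‹_›) N)
      (C := t ^ N / N ! * (M * R ^ (N + 1))) (fun x hx => ?_) t ⟨ht, le_rfl⟩
    · rw [norm_sub_rev]
      simpa [Finset.sum_range_succ', mul_pow, pow_succ] using hmvt.trans_eq (by ring)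
    · rw [norm_smul, norm_div, norm_pow, Real.norm_natCast,
        Real.norm_of_nonneg (by linarith [hx.2])]
      have hgx := hbd (N + 1) x (Ico_subset_Icc_self hx)
      have htx : (t - x) ^ N ≤ t ^ N := pow_le_pow_left₀ (by linarith [hx.2]) (by linarith [hx.1]) N
      exact mul_le_mul (by gcongr) hgx (norm_nonneg _) (by positivity)
  have hsummable := (summable_norm_pow_div_factorial_smul (fun l => hbd l 0 h0) t).of_norm
  rw [hsummable.hasSum_iff_tendsto_nat, ← tendsto_add_atTop_iff_nat 1,
    tendsto_iff_norm_sub_tendsto_zero]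
  refine squeeze_zero (fun _ => norm_nonneg _) hremainder ?_
  simpa using (FloorSemiring.tendsto_pow_div_factorial_atTop (R * t)).const_mul (M * R * t)

end Taylor

section IntIndexed

variable (p : ℕ) {a : ℤ → ℂ}

theorem mul_prod_Icc_add_eq_blockProd (i : ℕ) :
    a i * ∏ j ∈ Icc 1 p, a (i + j) = blockProd p (fun n : ℕ => a n) i := by
  rw [blockProd, Finset.prod_range_succ', ← Finset.Ico_add_one_right_eq_Icc,
    Finset.prod_Ico_eq_prod_range, mul_comm]
  push_cast
  simp only [add_zero]
  exact congrArg (· * _) (Finset.prod_congr rfl fun j _ => congrArg a (by ring))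

theorem mul_prod_Icc_sub_eq (ha : ∀ l < 0, a l = 0) (i : ℕ) :
    a i * ∏ j ∈ Icc 1 p, a (i - j) =
      if i < p then 0 else blockProd p (fun n : ℕ => a n) (i - p) := by
  split_ifs with hi
  · refine mul_eq_zero_of_right _
      (Finset.prod_eq_zero (i := i + 1) (by simp only [Finset.mem_Icc]; omega) (ha _ ?_))
    push_cast
    omega
  · obtain ⟨q, rfl⟩ : ∃ q, i = q + p := ⟨i - p, by omega⟩
    rw [Nat.add_sub_cancel, blockProd, Finset.prod_range_succ, mul_comm]
    congr 1
    refine Finset.prod_nbij' (fun j => p - j) (fun j => p - j) ?_ ?_ ?_ ?_ ?_ <;>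
      intro j hj <;> simp only [Finset.mem_Icc, Finset.mem_range] at hj ⊢
    · omega
    · omega
    · omega
    · omega
    · congr 1
      push_cast [show j ≤ p by omega]
      ring

theorem mul_sub_prod_Icc_eq_latticeRHS (ha : ∀ l < 0, a l = 0) (i : ℕ) :
    a i * (∏ j ∈ Icc 1 p, a (i + j) - ∏ j ∈ Icc 1 p, a (i - j)) =
      latticeRHS p (fun n : ℕ => a n) i := by
  rw [mul_sub, mul_prod_Icc_add_eq_blockProd, mul_prod_Icc_sub_eq p ha, latticeRHS]

end IntIndexed

section Series

open Nat Set

variable (p : ℕ)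

theorem ofReal_pow_div_factorial_smul (t : ℝ) (l : ℕ) (z : ℂ) :
    (t ^ l / l ! : ℝ) • z = z * (t : ℂ) ^ l / l ! := by
  rw [Complex.real_smul]
  push_cast
  ring

theorem norm_momL1_add_mul_le {a : ℕ → ℂ} {C : ℝ} (hC : ∀ i, ‖a i‖ ≤ C) (k j m : ℕ) :
    ‖momL1 p a (k + (p + 1) * j) m‖ ≤ (1 + C) ^ k * ((1 + C) ^ (p + 1)) ^ j := by
  rw [← pow_mul, ← pow_add]
  exact norm_L1powE0_le p a hC _ _

theorem summable_norm_momL1_mul_pow_div_factorial {a : ℕ → ℂ} {C : ℝ} (hC : ∀ i, ‖a i‖ ≤ C)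
    (k m : ℕ) (t : ℝ) :
    Summable fun l : ℕ => ‖momL1 p a (k + (p + 1) * l) m * (t : ℂ) ^ l / (l ! : ℂ)‖ := by
  simpa only [ofReal_pow_div_factorial_smul] using
    summable_norm_pow_div_factorial_smul (norm_momL1_add_mul_le p hC k · m) t

theorem hasDerivWithinAt_exp_integral {f : ℝ → ℂ} {a b x : ℝ} (hf : ContinuousOn f (Icc a b))
    (hx : x ∈ Icc a b) :
    HasDerivWithinAt (fun u => Complex.exp (∫ s in a..u, f s))
      (Complex.exp (∫ s in a..x, f s) * f x) (Icc a b) x := by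
  have : Fact (x ∈ Icc a b) := ⟨hx⟩
  refine (intervalIntegral.integral_hasDerivWithinAt_right ?_ ?_ (hf x hx)).cexp
  · exact (hf.mono (by rw [uIcc_of_le hx.1]; exact Icc_subset_Icc_right hx.2)).intervalIntegrable
  · exact hf.stronglyMeasurableAtFilter_nhdsWithin measurableSet_Icc x

/-- The witness is `τ = exp ∫₀ᵗ S_{p+1}^1(s) ds`, computed along the solution. -/
theorem exists_hasSum_momL1 {a : ℝ → ℕ → ℂ} {t C : ℝ} (ht : 0 ≤ t)
    (ha : ∀ x ∈ Icc 0 t, ∀ i, HasDerivWithinAt (fun u => a u i) (latticeRHS p (a x) i) (Icc 0 t) x)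
    (hC : ∀ x ∈ Icc 0 t, ∀ i, ‖a x i‖ ≤ C) :
    ∃ τ : ℂ, ∀ k m, m ≤ p + 1 →
      HasSum (fun l : ℕ => momL1 p (a 0) (k + (p + 1) * l) m * (t : ℂ) ^ l / (l ! : ℂ))
        (momL1 p (a t) k m * τ) := by
  set S : ℝ → ℂ := fun u => momL1 p (a u) (p + 1) 1
  have hS : ContinuousOn S (Icc 0 t) := fun x hx =>
    (hasDerivWithinAt_momL1 p (ha x hx) (p + 1) (by omega)).continuousWithinAt
  set τ : ℝ → ℂ := fun u => Complex.exp (∫ s in 0..u, S s)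
  have hτ : ∀ x ∈ Icc 0 t, HasDerivWithinAt τ (τ x * S x) (Icc 0 t) x :=
    fun x hx => hasDerivWithinAt_exp_integral hS hx
  obtain ⟨M, hM⟩ := isCompact_Icc.exists_bound_of_continuousOn
    fun x hx => (hτ x hx).continuousWithinAt
  refine ⟨τ t, fun k m hm => ?_⟩
  set g : ℕ → ℝ → ℂ := fun j u => momL1 p (a u) (k + (p + 1) * j) m * τ u
  have hg : ∀ j, ∀ x ∈ Icc 0 t, HasDerivWithinAt (g j) (g (j + 1) x) (Icc 0 t) x := by
    intro j x hx
    refine ((hasDerivWithinAt_momL1 p (ha x hx) _ hm).mul (hτ x hx)).congr_deriv ?_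
    simp only [g, S, mul_add, mul_one, add_assoc]
    ring
  have hbd : ∀ j, ∀ x ∈ Icc 0 t, ‖g j x‖ ≤ (1 + C) ^ k * M * ((1 + C) ^ (p + 1)) ^ j := by
    intro j x hx
    have hV := norm_momL1_add_mul_le p (hC x hx) k j m
    rw [norm_mul, mul_right_comm]
    exact mul_le_mul hV (hM x hx) (norm_nonneg _) ((norm_nonneg _).trans hV)
  have hτ0 : τ 0 = 1 := by simp [τ]
  have hsum := hasSum_taylor_of_hasDerivWithinAt ht hg hbd
  simp only [g, hτ0, mul_one, ofReal_pow_div_factorial_smul] at hsum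
  exact hsum

end Series

theorem momL1_series_formula_general (p : ℕ) (T : ℝ)
    (a : ℤ → ℝ → ℂ)
    (haneg : ∀ l : ℤ, l < 0 → ∀ t : ℝ, a l t = 0)
    (haode : ∀ i : ℤ, 0 ≤ i → ∀ t ∈ Set.Ico (0 : ℝ) T, HasDerivWithinAt (a i)
      (a i t * (∏ j ∈ Finset.Icc 1 p, a (i + (j : ℤ)) t -
        ∏ j ∈ Finset.Icc 1 p, a (i - (j : ℤ)) t)) (Set.Ico (0 : ℝ) T) t)
    (habd : ∃ C : ℝ, ∀ i : ℤ, 0 ≤ i → ∀ t ∈ Set.Ico (0 : ℝ) T, ‖a i t‖ ≤ C) :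
    ∀ k m : ℕ, 1 ≤ m → m ≤ p → ∀ t ∈ Set.Ico (0 : ℝ) T,
      Summable (fun l : ℕ =>
        ‖momL1 p (fun n : ℕ => a (n : ℤ) 0) (k + (p + 1) * l) m * (t : ℂ) ^ l /
          (l.factorial : ℂ)‖) ∧
      Summable (fun l : ℕ =>
        ‖momL1 p (fun n : ℕ => a (n : ℤ) 0) ((p + 1) * l) 1 * (t : ℂ) ^ l /
          (l.factorial : ℂ)‖) ∧
      momL1 p (fun n : ℕ => a (n : ℤ) t) k m *
          ∑' l : ℕ, momL1 p (fun n : ℕ => a (n : ℤ) 0) ((p + 1) * l) 1 * (t : ℂ) ^ l /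
            (l.factorial : ℂ) =
        ∑' l : ℕ, momL1 p (fun n : ℕ => a (n : ℤ) 0) (k + (p + 1) * l) m * (t : ℂ) ^ l /
          (l.factorial : ℂ) := by
  intro k m _ hmp t ht
  obtain ⟨C, hC⟩ := habd
  have hsub : Set.Icc 0 t ⊆ Set.Ico 0 T := Set.Icc_subset_Ico_right ht.2
  have hode : ∀ x ∈ Set.Icc 0 t, ∀ i : ℕ, HasDerivWithinAt (fun u => a i u)
      (latticeRHS p (fun n : ℕ => a n x) i) (Set.Icc 0 t) x := fun x hx i => by
    rw [← mul_sub_prod_Icc_eq_latticeRHS p (haneg · · x)]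
    exact (haode i (Int.natCast_nonneg i) x (hsub hx)).mono hsub
  have hC0 : ∀ i : ℕ, ‖a i 0‖ ≤ C :=
    fun i => hC i (Int.natCast_nonneg i) 0 ⟨le_rfl, ht.1.trans_lt ht.2⟩
  obtain ⟨τ, hτ⟩ := exists_hasSum_momL1 p ht.1 hode
    fun x hx i => hC i (Int.natCast_nonneg i) x (hsub hx)
  have hτ1 := hτ 0 1 (by omega)
  simp only [zero_add, momL1_zero_one, one_mul] at hτ1
  refine ⟨summable_norm_momL1_mul_pow_div_factorial p hC0 k m t,
    by simpa using summable_norm_momL1_mul_pow_div_factorial p hC0 0 1 t, ?_⟩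
  rw [hτ1.tsum_eq, (hτ k m (by omega)).tsum_eq]

/-- Series formula for the moments of `L1(t)` along a bounded solution of the
semi-infinite Bogoyavlensky lattice:
`S_k^m(t) · Σ_l S_{(p+1)l}^1(0) t^l/l! = Σ_l S_{k+(p+1)l}^m(0) t^l/l!`, both series being
absolutely convergent. -/
theorem momL1_series_formula (p : ℕ) (hp : 1 ≤ p) (T : ℝ) (hT : 0 < T)
    (a : ℤ → ℝ → ℂ)
    (haneg : ∀ l : ℤ, l < 0 → ∀ t : ℝ, a l t = 0)
    (hane : ∀ i : ℤ, 0 ≤ i → ∀ t ∈ Set.Ico (0 : ℝ) T, a i t ≠ 0)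
    (haode : ∀ i : ℤ, 0 ≤ i → ∀ t ∈ Set.Ico (0 : ℝ) T, HasDerivWithinAt (a i)
      (a i t * (∏ j ∈ Finset.Icc 1 p, a (i + (j : ℤ)) t -
        ∏ j ∈ Finset.Icc 1 p, a (i - (j : ℤ)) t)) (Set.Ico (0 : ℝ) T) t)
    (habd : ∃ C : ℝ, ∀ i : ℤ, 0 ≤ i → ∀ t ∈ Set.Ico (0 : ℝ) T, ‖a i t‖ ≤ C) :
    ∀ k m : ℕ, 1 ≤ m → m ≤ p → ∀ t ∈ Set.Ico (0 : ℝ) T,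
      Summable (fun l : ℕ =>
        ‖momL1 p (fun n : ℕ => a (n : ℤ) 0) (k + (p + 1) * l) m * (t : ℂ) ^ l /
          (l.factorial : ℂ)‖) ∧
      Summable (fun l : ℕ =>
        ‖momL1 p (fun n : ℕ => a (n : ℤ) 0) ((p + 1) * l) 1 * (t : ℂ) ^ l /
          (l.factorial : ℂ)‖) ∧
      momL1 p (fun n : ℕ => a (n : ℤ) t) k m *
          ∑' l : ℕ, momL1 p (fun n : ℕ => a (n : ℤ) 0) ((p + 1) * l) 1 * (t : ℂ) ^ l /
            (l.factorial : ℂ) =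
        ∑' l : ℕ, momL1 p (fun n : ℕ => a (n : ℤ) 0) (k + (p + 1) * l) m * (t : ℂ) ^ l /
          (l.factorial : ℂ) :=
  momL1_series_formula_general p T a haneg haode habd
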